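/- Let G be a group, let S, T, U be subgroups of G forming a TPP triple (regarded as subsets), and let c ∈ G with c ∉ S. Then Q(S ∪ {c}) ∩ TU = (S ∩ TU) ∪ (cS ∩ TU) ∪ (Sc⁻¹ ∩ TU), and S ∩ TU = {1}, where cS = {cx : x ∈ S}, Sc⁻¹ = {xc⁻¹ : x ∈ S}, and TU = {tu : t ∈ T, u ∈ U}. -/

import Mathlib

open Pointwise

/-- The right quotient `Q(X) = {x y⁻¹ : x, y ∈ X}` of a subset of a group. -/
def rightQuotient {G : Type*} [Group G] (X : Set G) : Set G :=
  {g | ∃ x ∈ X, ∃ y ∈ X, g = x * y⁻¹}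

/-- Subsets `S, T, U` of a group satisfy the Triple Product Property if for all
`s ∈ Q(S)`, `t ∈ Q(T)`, `u ∈ Q(U)`, `s * t * u = 1` iff `s = t = u = 1`. -/
def TPP {G : Type*} [Group G] (S T U : Set G) : Prop :=
  ∀ s ∈ rightQuotient S, ∀ t ∈ rightQuotient T, ∀ u ∈ rightQuotient U,
    (s * t * u = 1 ↔ s = 1 ∧ t = 1 ∧ u = 1)

section rightQuotient

variable {G : Type*} [Group G]

lemma one_mem_rightQuotient {X : Set G} (hX : X.Nonempty) : (1 : G) ∈ rightQuotient X :=
  let ⟨x, hx⟩ := hX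
  ⟨x, hx, x, hx, (mul_inv_cancel x).symm⟩

lemma inv_mem_rightQuotient {X : Set G} {g : G} (hg : g ∈ rightQuotient X) :
    g⁻¹ ∈ rightQuotient X := by
  obtain ⟨x, hx, y, hy, rfl⟩ := hg
  exact ⟨y, hy, x, hx, by group⟩

lemma rightQuotient_coe_subgroup (H : Subgroup G) : rightQuotient (H : Set G) = H := by
  ext g
  constructor
  · rintro ⟨x, hx, y, hy, rfl⟩
    exact H.mul_mem hx (H.inv_mem hy)
  · intro hg
    exact ⟨g, hg, 1, H.one_mem, by simp⟩

lemma rightQuotient_coe_subgroup_union_singleton (H : Subgroup G) (c : G) :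
    rightQuotient ((H : Set G) ∪ {c}) =
      (H : Set G) ∪ (fun x => c * x) '' (H : Set G) ∪ (fun x => x * c⁻¹) '' (H : Set G) := by
  ext g
  constructor
  · rintro ⟨x, hx | rfl, y, hy | rfl, rfl⟩
    · exact Or.inl (Or.inl (H.mul_mem hx (H.inv_mem hy)))
    · exact Or.inr ⟨x, hx, rfl⟩
    · exact Or.inl (Or.inr ⟨y⁻¹, H.inv_mem hy, rfl⟩)
    · exact Or.inl (Or.inl (by simp))
  · rintro ((hg | ⟨x, hx, rfl⟩) | ⟨x, hx, rfl⟩)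
    · exact ⟨g, Or.inl hg, 1, Or.inl H.one_mem, by simp⟩
    · exact ⟨c, Or.inr rfl, x⁻¹, Or.inl (H.inv_mem hx), by simp⟩
    · exact ⟨x, Or.inl hx, c, Or.inr rfl, rfl⟩

end rightQuotient

-- An element `s = t * u` of `Q(S) ∩ Q(T) Q(U)` gives the relation `s⁻¹ * t * u = 1`.
theorem TPP.rightQuotient_inter_mul_eq_one {G : Type*} [Group G] {S T U : Set G}
    (h : TPP S T U) (hS : S.Nonempty) (hT : T.Nonempty) (hU : U.Nonempty) :
    rightQuotient S ∩ (rightQuotient T * rightQuotient U) = {1} := by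
  ext g
  constructor
  · rintro ⟨hg, t, ht, u, hu, rfl⟩
    obtain ⟨-, rfl, rfl⟩ := (h _ (inv_mem_rightQuotient hg) t ht u hu).1 (by group)
    exact mul_one 1
  · rintro rfl
    exact ⟨one_mem_rightQuotient hS, 1, one_mem_rightQuotient hT, 1, one_mem_rightQuotient hU,
      mul_one 1⟩

theorem stmt_17_general {G : Type*} [Group G] (S T U : Subgroup G)
    (h : TPP (S : Set G) (T : Set G) (U : Set G)) (c : G) :
    rightQuotient ((S : Set G) ∪ {c}) ∩ ((T : Set G) * (U : Set G)) =
      ((S : Set G) ∩ ((T : Set G) * (U : Set G))) ∪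
        ((fun x => c * x) '' (S : Set G) ∩ ((T : Set G) * (U : Set G))) ∪
        ((fun x => x * c⁻¹) '' (S : Set G) ∩ ((T : Set G) * (U : Set G))) ∧
      (S : Set G) ∩ ((T : Set G) * (U : Set G)) = {1} := by
  constructor
  · rw [rightQuotient_coe_subgroup_union_singleton, Set.union_inter_distrib_right,
      Set.union_inter_distrib_right]
  · simpa only [rightQuotient_coe_subgroup] using
      h.rightQuotient_inter_mul_eq_one (OneMemClass.coe_nonempty S)
        (OneMemClass.coe_nonempty T) (OneMemClass.coe_nonempty U)

theorem stmt_17 {G : Type*} [Group G] (S T U : Subgroup G)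
    (h : TPP (S : Set G) (T : Set G) (U : Set G)) (c : G) (hc : c ∉ S) :
    rightQuotient ((S : Set G) ∪ {c}) ∩ ((T : Set G) * (U : Set G)) =
      ((S : Set G) ∩ ((T : Set G) * (U : Set G))) ∪
        ((fun x => c * x) '' (S : Set G) ∩ ((T : Set G) * (U : Set G))) ∪
        ((fun x => x * c⁻¹) '' (S : Set G) ∩ ((T : Set G) * (U : Set G))) ∧
      (S : Set G) ∩ ((T : Set G) * (U : Set G)) = {1} :=
  stmt_17_general S T U h c
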